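/- arXiv:math/0604236 — 3 statements merged into one kernel-verified Lean document; each statement's English description precedes it below -/
import Mathlib

section
/- Let E be a real inner product space, M ⊆ E a subset, k ≥ 2 an integer with indices taken modulo k, and x₁,…,x_k ∈ M with x_i ≠ x_{i+1} for all i ∈ ℤ/k. Suppose (x₁,…,x_k) is a critical point of l_k along curves in M, i.e., for every family of curves γ_i in M through x_i (each differentiable at 0), the function t ↦ ∑_{i∈ℤ/k} ‖γ_i(t) − γ_{i+1}(t)‖ has derivative 0 at 0. Set a_i = (x_i − x_{i+1})/‖x_i − x_{i+1}‖. Then (a₁,…,a_k, x₁,…,x_k) is a critical point of f_k along curves: for every family of curves α_i in the unit sphere of E through a_i and curves γ_i in M through x_i (each differentiable at 0), the function t ↦ ∑_{i∈ℤ/k} ⟪α_i(t), γ_i(t) − γ_{i+1}(t)⟫ has derivative 0 at 0. -/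
/-!
Termwise, `‖γ_i − γ_{i+1}‖` and `⟪α_i, γ_i − γ_{i+1}⟫` have the same derivative
`⟪a_i, γ_i'(0) − γ_{i+1}'(0)⟫` at `0`: the second because `α_i'(0)` is orthogonal to the unit
vector `α_i(0) = a_i`, which is parallel to `x_i − x_{i+1}`. Hence the derivatives of `f_k` and
`l_k` along the curves coincide, and the latter vanishes by criticality.
-/

open RealInnerProductSpace

section DerivInner

variable {E : Type*} [NormedAddCommGroup E] [InnerProductSpace ℝ E] {t : ℝ}

theorem HasDerivAt.norm_of_ne_zero {f : ℝ → E} {f' : E} (hf : HasDerivAt f f' t)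
    (h0 : f t ≠ 0) : HasDerivAt (‖f ·‖) ⟪‖f t‖⁻¹ • f t, f'⟫ t := by
  have hpos : 0 < ‖f t‖ := norm_pos_iff.mpr h0
  have hsqrt := hf.norm_sq.sqrt (pow_pos hpos 2).ne'
  simp only [Real.sqrt_sq (norm_nonneg _)] at hsqrt
  convert hsqrt using 1
  rw [real_inner_smul_left]
  field_simp

theorem HasDerivAt.inner_self_eq_zero_of_norm_eq {f : ℝ → E} {f' : E} {r : ℝ}
    (hf : HasDerivAt f f' t) (hr : ∀ s, ‖f s‖ = r) : ⟪f t, f'⟫ = 0 := by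
  have hconst : HasDerivAt (‖f ·‖ ^ 2) 0 t := by
    simpa only [hr] using hasDerivAt_const t (r ^ 2)
  have := hf.norm_sq.unique hconst
  linarith

theorem HasDerivAt.inner_of_norm_eq_one_of_parallel {α δ : ℝ → E} {α' δ' : E} {c : ℝ}
    (hα : HasDerivAt α α' t) (hα1 : ∀ s, ‖α s‖ = 1) (hδ : HasDerivAt δ δ' t)
    (hpar : δ t = c • α t) : HasDerivAt (fun s => ⟪α s, δ s⟫) ⟪α t, δ'⟫ t := by
  have horth : ⟪α', δ t⟫ = 0 := by
    rw [hpar, real_inner_smul_right, real_inner_comm,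
      hα.inner_self_eq_zero_of_norm_eq hα1, mul_zero]
  simpa only [horth, add_zero] using hα.inner ℝ hδ

end DerivInner

theorem critical_lk_to_critical_fk_general
    {E : Type*} [NormedAddCommGroup E] [InnerProductSpace ℝ E]
    (M : Set E) (k : ℕ) [NeZero k]
    (x : ZMod k → E)
    (hne : ∀ i : ZMod k, x i ≠ x (i + 1))
    (hcrit : ∀ γ : ZMod k → ℝ → E,
      (∀ i t, γ i t ∈ M) → (∀ i, γ i 0 = x i) →
      (∀ i, DifferentiableAt ℝ (γ i) 0) →
      HasDerivAt (fun t => ∑ i : ZMod k, ‖γ i t - γ (i + 1) t‖) 0 0)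
    (a : ZMod k → E)
    (ha : ∀ i, a i = ‖x i - x (i + 1)‖⁻¹ • (x i - x (i + 1))) :
    ∀ (α γ : ZMod k → ℝ → E),
      (∀ i t, ‖α i t‖ = 1) → (∀ i, α i 0 = a i) →
      (∀ i, DifferentiableAt ℝ (α i) 0) →
      (∀ i t, γ i t ∈ M) → (∀ i, γ i 0 = x i) →
      (∀ i, DifferentiableAt ℝ (γ i) 0) →
      HasDerivAt (fun t => ∑ i : ZMod k, ⟪α i t, γ i t - γ (i + 1) t⟫) 0 0 := by
  intro α γ hα1 hα0 hαd hγM hγ0 hγd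
  set v : ZMod k → E := fun i => deriv (γ i) 0 - deriv (γ (i + 1)) 0
  have hdiff (i : ZMod k) : HasDerivAt (fun t => γ i t - γ (i + 1) t) (v i) 0 :=
    (hγd i).hasDerivAt.sub (hγd (i + 1)).hasDerivAt
  have hnorm (i : ZMod k) : HasDerivAt (fun t => ‖γ i t - γ (i + 1) t‖) ⟪a i, v i⟫ 0 := by
    have := (hdiff i).norm_of_ne_zero (by simpa [hγ0, sub_eq_zero] using hne i)
    simpa only [hγ0, ← ha] using this
  have hinner (i : ZMod k) :
      HasDerivAt (fun t => ⟪α i t, γ i t - γ (i + 1) t⟫) ⟪a i, v i⟫ 0 := by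
    have hpar : γ i 0 - γ (i + 1) 0 = ‖x i - x (i + 1)‖ • α i 0 := by
      rw [hα0, ha, smul_smul, hγ0, hγ0, mul_inv_cancel₀ (by simpa [sub_eq_zero] using hne i),
        one_smul]
    simpa only [hα0] using
      (hαd i).hasDerivAt.inner_of_norm_eq_one_of_parallel (hα1 i) (hdiff i) hpar
  have hsum : ∑ i, ⟪a i, v i⟫ = 0 :=
    (HasDerivAt.fun_sum fun i _ => hnorm i).unique (hcrit γ hγM hγ0 hγd)
  simpa only [hsum] using HasDerivAt.fun_sum (u := Finset.univ) fun i _ => hinner i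

/-- If `(x₁,…,x_k)` (with `x_i ∈ M`, `x_i ≠ x_{i+1}`) is a critical point of the
perimeter `l_k` along curves in `M`, then with `a_i = (x_i − x_{i+1})/‖x_i − x_{i+1}‖`
the point `(a₁,…,a_k,x₁,…,x_k)` is a critical point of
`f_k = ∑ ⟪a_i, x_i − x_{i+1}⟫` along curves in the sphere and in `M`. -/
theorem critical_lk_to_critical_fk
    {E : Type*} [NormedAddCommGroup E] [InnerProductSpace ℝ E]
    (M : Set E) (k : ℕ) [NeZero k] (hk : 2 ≤ k)
    (x : ZMod k → E) (hxM : ∀ i, x i ∈ M)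
    (hne : ∀ i : ZMod k, x i ≠ x (i + 1))
    (hcrit : ∀ γ : ZMod k → ℝ → E,
      (∀ i t, γ i t ∈ M) → (∀ i, γ i 0 = x i) →
      (∀ i, DifferentiableAt ℝ (γ i) 0) →
      HasDerivAt (fun t => ∑ i : ZMod k, ‖γ i t - γ (i + 1) t‖) 0 0)
    (a : ZMod k → E)
    (ha : ∀ i, a i = ‖x i - x (i + 1)‖⁻¹ • (x i - x (i + 1))) :
    ∀ (α γ : ZMod k → ℝ → E),
      (∀ i t, ‖α i t‖ = 1) → (∀ i, α i 0 = a i) →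
      (∀ i, DifferentiableAt ℝ (α i) 0) →
      (∀ i t, γ i t ∈ M) → (∀ i, γ i 0 = x i) →
      (∀ i, DifferentiableAt ℝ (γ i) 0) →
      HasDerivAt (fun t => ∑ i : ZMod k, ⟪α i t, γ i t - γ (i + 1) t⟫) 0 0 :=
  critical_lk_to_critical_fk_general M k x hne hcrit a ha
end

section
/- Let E be a real inner product space, M ⊆ E a subset, k ≥ 2 an integer with indices taken modulo k, x₁,…,x_k ∈ M and a₁,…,a_k ∈ E with ‖a_i‖ = 1. Suppose (a₁,…,a_k,x₁,…,x_k) is a critical point of f_k along curves, i.e., for every family of curves α_i in the unit sphere of E through a_i and curves γ_i in M through x_i (each differentiable at 0), the function t ↦ ∑_{i∈ℤ/k} ⟪α_i(t), γ_i(t) − γ_{i+1}(t)⟫ has derivative 0 at 0. Then for every i ∈ ℤ/k: (1) there exists c_i ∈ ℝ such that x_i − x_{i+1} = c_i • a_i; and (2) for every curve γ in M through x_i differentiable at 0, ⟪a_{i−1} − a_i, γ'(0)⟫ = 0. -/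
/-!
Both conditions are first variations of the bilinear function `f_k`. Moving a single `a_i`
along a great circle with velocity `w ⟂ a_i` gives `⟪w, x_i - x_{i+1}⟫ = 0`, so the chord lies in
`(ℝ a_i)ᗮᗮ = ℝ a_i`. Moving a single `x_i` along a curve in `M` with velocity `v` gives, after a
cyclic summation by parts, `⟪a_i - a_{i-1}, v⟫ = 0`.
-/

open RealInnerProductSpace

section

variable {E : Type*} [NormedAddCommGroup E] [InnerProductSpace ℝ E]

theorem exists_eq_smul_of_forall_inner_eq_zero {a u : E}
    (h : ∀ w, ⟪a, w⟫ = 0 → ⟪w, u⟫ = 0) : ∃ c : ℝ, u = c • a := by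
  have hu : u ∈ (ℝ ∙ a)ᗮᗮ := fun w hw =>
    h w (Submodule.mem_orthogonal_singleton_iff_inner_right.mp hw)
  rw [Submodule.orthogonal_orthogonal] at hu
  obtain ⟨c, rfl⟩ := Submodule.mem_span_singleton.mp hu
  exact ⟨c, rfl⟩

theorem norm_cos_smul_add_sin_smul {a u : E} (ha : ‖a‖ = 1) (hu : ‖u‖ = 1)
    (hau : ⟪a, u⟫ = 0) (θ : ℝ) : ‖Real.cos θ • a + Real.sin θ • u‖ = 1 := by
  have hsq : ‖Real.cos θ • a + Real.sin θ • u‖ ^ 2 = 1 := by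
    rw [norm_add_sq_real, real_inner_smul_left, real_inner_smul_right, hau, norm_smul,
      norm_smul, ha, hu, Real.norm_eq_abs, Real.norm_eq_abs]
    simp [sq_abs, Real.cos_sq_add_sin_sq θ]
  exact (pow_eq_one_iff_of_nonneg (norm_nonneg _) two_ne_zero).mp hsq

/-- The curve is a great circle run at speed `‖w‖`. -/
theorem exists_hasDerivAt_of_inner_eq_zero {a w : E} (ha : ‖a‖ = 1) (hw : ⟪a, w⟫ = 0) :
    ∃ α : ℝ → E, (∀ t, ‖α t‖ = 1) ∧ α 0 = a ∧ HasDerivAt α w 0 := by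
  rcases eq_or_ne w 0 with rfl | hw0
  · exact ⟨fun _ => a, fun _ => ha, rfl, hasDerivAt_const _ _⟩
  set u := ‖w‖⁻¹ • w
  have hu : ‖u‖ = 1 := norm_smul_inv_norm hw0
  have hau : ⟪a, u⟫ = 0 := by simp [u, real_inner_smul_right, hw]
  refine ⟨fun t => Real.cos (‖w‖ * t) • a + Real.sin (‖w‖ * t) • u,
    fun t => norm_cos_smul_add_sin_smul ha hu hau _, by simp, ?_⟩
  have hlin : HasDerivAt (fun t : ℝ => ‖w‖ * t) ‖w‖ 0 := by
    simpa using (hasDerivAt_id (0 : ℝ)).const_mul ‖w‖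
  convert (hlin.cos.smul_const a).fun_add (hlin.sin.smul_const u) using 1
  simp [u, smul_smul, norm_ne_zero_iff.mpr hw0]

theorem hasDerivAt_update_const {ι : Type*} [DecidableEq ι] (c : ι → E) (i : ι)
    {β : ℝ → E} {w : E} {t₀ : ℝ} (hβ : HasDerivAt β w t₀) (j : ι) :
    HasDerivAt (Function.update (fun j _ => c j) i β j) ((Pi.single i w : ι → E) j) t₀ := by
  rcases eq_or_ne j i with rfl | hj
  · simpa using hβ
  · simpa [hj] using hasDerivAt_const t₀ (c j)

end

section

variable {G E : Type*} [Fintype G] [NormedAddCommGroup E] [InnerProductSpace ℝ E]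

/-- The function `f_k`, with `ℤ/k` replaced by any finite type carrying a successor `i + 1`. -/
def cyclicChordSum [Add G] [One G] (a x : G → E) : ℝ :=
  ∑ i, ⟪a i, x i - x (i + 1)⟫

theorem cyclicChordSum_zero_left [Add G] [One G] (x : G → E) : cyclicChordSum 0 x = 0 := by
  simp [cyclicChordSum]

theorem cyclicChordSum_zero_right [Add G] [One G] (a : G → E) : cyclicChordSum a 0 = 0 := by
  simp [cyclicChordSum]

theorem cyclicChordSum_pi_single_left [Add G] [One G] [DecidableEq G] (i : G) (w : E)
    (x : G → E) : cyclicChordSum (Pi.single i w) x = ⟪w, x i - x (i + 1)⟫ := by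
  rw [cyclicChordSum, Finset.sum_eq_single i (fun j _ hj => by simp [hj]) (by simp)]
  simp

theorem cyclicChordSum_eq_sum_inner_sub [AddGroup G] [One G] (a x : G → E) :
    cyclicChordSum a x = ∑ i, ⟪a i - a (i - 1), x i⟫ := by
  have hshift : ∑ i, ⟪a i, x (i + 1)⟫ = ∑ i, ⟪a (i - 1), x i⟫ :=
    Fintype.sum_equiv (Equiv.addRight 1) _ _ (fun i => by simp)
  simp only [cyclicChordSum, inner_sub_left, inner_sub_right, Finset.sum_sub_distrib, hshift]

theorem cyclicChordSum_pi_single_right [AddGroup G] [One G] [DecidableEq G] (a : G → E)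
    (i : G) (v : E) : cyclicChordSum a (Pi.single i v) = ⟪a i - a (i - 1), v⟫ := by
  rw [cyclicChordSum_eq_sum_inner_sub, Finset.sum_eq_single i (fun j _ hj => by simp [hj])
    (by simp)]
  simp

theorem hasDerivAt_cyclicChordSum [Add G] [One G] {α γ : G → ℝ → E} {α' γ' : G → E} {t₀ : ℝ}
    (hα : ∀ i, HasDerivAt (α i) (α' i) t₀) (hγ : ∀ i, HasDerivAt (γ i) (γ' i) t₀) :
    HasDerivAt (fun t => cyclicChordSum (fun i => α i t) (fun i => γ i t))
      (cyclicChordSum α' (fun i => γ i t₀) + cyclicChordSum (fun i => α i t₀) γ') t₀ := by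
  simp only [cyclicChordSum, ← Finset.sum_add_distrib]
  exact HasDerivAt.fun_sum fun i _ =>
    ((hα i).inner ℝ ((hγ i).fun_sub (hγ (i + 1)))).congr_deriv (add_comm _ _)

def IsCriticalAlongCurves [Add G] [One G] (M : Set E) (a x : G → E) : Prop :=
  ∀ α γ : G → ℝ → E, (∀ i t, ‖α i t‖ = 1) → (∀ i, α i 0 = a i) →
    (∀ i, DifferentiableAt ℝ (α i) 0) → (∀ i t, γ i t ∈ M) → (∀ i, γ i 0 = x i) →
    (∀ i, DifferentiableAt ℝ (γ i) 0) →
    HasDerivAt (fun t => cyclicChordSum (fun i => α i t) (fun i => γ i t)) 0 0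

namespace IsCriticalAlongCurves

variable {M : Set E} {a x : G → E}

theorem first_variation_eq_zero [Add G] [One G] (h : IsCriticalAlongCurves M a x)
    {α γ : G → ℝ → E} {α' γ' : G → E} (hα1 : ∀ i t, ‖α i t‖ = 1) (hα0 : ∀ i, α i 0 = a i)
    (hα : ∀ i, HasDerivAt (α i) (α' i) 0) (hγM : ∀ i t, γ i t ∈ M) (hγ0 : ∀ i, γ i 0 = x i)
    (hγ : ∀ i, HasDerivAt (γ i) (γ' i) 0) :
    cyclicChordSum α' x + cyclicChordSum a γ' = 0 := by
  have hderiv := hasDerivAt_cyclicChordSum hα hγ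
  simp only [hα0, hγ0] at hderiv
  exact hderiv.unique <| h α γ hα1 hα0 (fun i => (hα i).differentiableAt) hγM hγ0
    fun i => (hγ i).differentiableAt

theorem exists_sub_eq_smul [Add G] [One G] [DecidableEq G] (h : IsCriticalAlongCurves M a x)
    (ha : ∀ i, ‖a i‖ = 1) (hxM : ∀ i, x i ∈ M) (i : G) :
    ∃ c : ℝ, x i - x (i + 1) = c • a i := by
  refine exists_eq_smul_of_forall_inner_eq_zero fun w hw => ?_
  obtain ⟨β, hβ1, hβ0, hβ⟩ := exists_hasDerivAt_of_inner_eq_zero (ha i) hw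
  have hvar := h.first_variation_eq_zero (γ := fun j _ => x j) (γ' := 0)
    ((Function.forall_update_iff _ fun j (α : ℝ → E) => ∀ t, ‖α t‖ = 1).2
      ⟨hβ1, fun j _ _ => ha j⟩)
    ((Function.forall_update_iff _ fun j (α : ℝ → E) => α 0 = a j).2 ⟨hβ0, fun _ _ => rfl⟩)
    (hasDerivAt_update_const a i hβ) (fun j _ => hxM j) (fun _ => rfl)
    (fun j => hasDerivAt_const 0 (x j))
  rwa [cyclicChordSum_pi_single_left, cyclicChordSum_zero_right, add_zero] at hvar

theorem inner_sub_eq_zero [AddGroup G] [One G] [DecidableEq G]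
    (h : IsCriticalAlongCurves M a x) (ha : ∀ i, ‖a i‖ = 1) (hxM : ∀ i, x i ∈ M) {i : G}
    {γ : ℝ → E} {v : E} (hγM : ∀ t, γ t ∈ M) (hγ0 : γ 0 = x i) (hγ : HasDerivAt γ v 0) :
    ⟪a (i - 1) - a i, v⟫ = 0 := by
  have hvar := h.first_variation_eq_zero (α := fun j _ => a j) (α' := 0)
    (fun j _ => ha j) (fun _ => rfl) (fun j => hasDerivAt_const 0 (a j))
    ((Function.forall_update_iff _ fun j (γ : ℝ → E) => ∀ t, γ t ∈ M).2
      ⟨hγM, fun j _ _ => hxM j⟩)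
    ((Function.forall_update_iff _ fun j (γ : ℝ → E) => γ 0 = x j).2 ⟨hγ0, fun _ _ => rfl⟩)
    (hasDerivAt_update_const x i hγ)
  rw [cyclicChordSum_zero_left, zero_add, cyclicChordSum_pi_single_right] at hvar
  rw [← neg_sub, inner_neg_left, hvar, neg_zero]

end IsCriticalAlongCurves

end

theorem critical_fk_conditions_general
    {E : Type*} [NormedAddCommGroup E] [InnerProductSpace ℝ E]
    (M : Set E) (k : ℕ) [NeZero k]
    (x : ZMod k → E) (hxM : ∀ i, x i ∈ M)
    (a : ZMod k → E) (ha : ∀ i, ‖a i‖ = 1)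
    (hcrit : ∀ (α γ : ZMod k → ℝ → E),
      (∀ i t, ‖α i t‖ = 1) → (∀ i, α i 0 = a i) →
      (∀ i, DifferentiableAt ℝ (α i) 0) →
      (∀ i t, γ i t ∈ M) → (∀ i, γ i 0 = x i) →
      (∀ i, DifferentiableAt ℝ (γ i) 0) →
      HasDerivAt (fun t => ∑ i : ZMod k, ⟪α i t, γ i t - γ (i + 1) t⟫) 0 0) :
    ∀ i : ZMod k,
      (∃ c : ℝ, x i - x (i + 1) = c • a i) ∧
      (∀ (γ : ℝ → E) (v : E), (∀ t, γ t ∈ M) → γ 0 = x i → HasDerivAt γ v 0 →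
        ⟪a (i - 1) - a i, v⟫ = 0) := by
  have hcrit' : IsCriticalAlongCurves M a x := hcrit
  exact fun i => ⟨hcrit'.exists_sub_eq_smul ha hxM i,
    fun _ _ hγM hγ0 hγ => hcrit'.inner_sub_eq_zero ha hxM hγM hγ0 hγ⟩

/-- At a critical point `(a₁,…,a_k,x₁,…,x_k)` of `f_k` along curves (with
`x_i ∈ M`, `‖a_i‖ = 1`): (1) each chord `x_i − x_{i+1}` is parallel to `a_i`, and
(2) `a_{i−1} − a_i` is perpendicular to every tangent direction of `M` at `x_i`. -/
theorem critical_fk_conditions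
    {E : Type*} [NormedAddCommGroup E] [InnerProductSpace ℝ E]
    (M : Set E) (k : ℕ) [NeZero k] (hk : 2 ≤ k)
    (x : ZMod k → E) (hxM : ∀ i, x i ∈ M)
    (a : ZMod k → E) (ha : ∀ i, ‖a i‖ = 1)
    (hcrit : ∀ (α γ : ZMod k → ℝ → E),
      (∀ i t, ‖α i t‖ = 1) → (∀ i, α i 0 = a i) →
      (∀ i, DifferentiableAt ℝ (α i) 0) →
      (∀ i t, γ i t ∈ M) → (∀ i, γ i 0 = x i) →
      (∀ i, DifferentiableAt ℝ (γ i) 0) →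
      HasDerivAt (fun t => ∑ i : ZMod k, ⟪α i t, γ i t - γ (i + 1) t⟫) 0 0) :
    ∀ i : ZMod k,
      (∃ c : ℝ, x i - x (i + 1) = c • a i) ∧
      (∀ (γ : ℝ → E) (v : E), (∀ t, γ t ∈ M) → γ 0 = x i → HasDerivAt γ v 0 →
        ⟪a (i - 1) - a i, v⟫ = 0) :=
  critical_fk_conditions_general M k x hxM a ha hcrit
end

section
/- Let E be a real inner product space, M ⊆ E a subset, k > 2 an integer with indices taken modulo k, and let (a₁,…,a_k,x₁,…,x_k) with x_i ∈ M and ‖a_i‖ = 1 be a critical point of f_k along curves. Let k' be an integer with 1 < k' < k, let β₁,…,β_{k'} ≥ 1 be integers with β₁ + ⋯ + β_{k'} = k, and set α_i = β₁ + ⋯ + β_i. Assume the x_i coincide in blocks: x_{α_{i−1}+1} = ⋯ = x_{α_i} for each 1 ≤ i ≤ k' (with α₀ = 0), while x_{α_i} ≠ x_{α_i + 1} for 1 ≤ i ≤ k' − 1 and x_{α_{k'}} ≠ x₁. Then the point (a_{α_1}, a_{α_2}, …, a_{α_{k'}}, x_{α_1}, x_{α_2}, …, x_{α_{k'}}) is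 a critical point of f_{k'} along curves. -/
/-!
Given test curves `α, γ` for `f_{k'}`, lift them to test curves for `f_k`: every point of
block `i` moves along `γ i`, the unit vector at the last point of block `i` moves along `α i`,
and every other unit vector `a j` stays fixed. Inside a block consecutive position curves
coincide, so only the block tops contribute to `f_k`, and there the summand is exactly the
`i`-th summand of `f_{k'}`. Thus `f_k` along the lifted curves is `f_{k'}` along the given ones,
and the criticality of `f_k` transfers.
-/

open Finset RealInnerProductSpace

theorem ZMod.sum_eq_sum_range {M : Type*} [AddCommMonoid M] (n : ℕ) [NeZero n]
    (f : ZMod n → M) : ∑ j, f j = ∑ i ∈ range n, f i :=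
  Finset.sum_nbij' ZMod.val Nat.cast (fun j _ => mem_range.2 j.val_lt) (fun _ _ => mem_univ _)
    (fun j _ => ZMod.natCast_zmod_val j) (fun _ hi => ZMod.val_natCast_of_lt (mem_range.1 hi))
    (fun j _ => by rw [ZMod.natCast_zmod_val])

theorem Finset.sum_range_eq_sum_sum_Ico {M : Type*} [AddCommMonoid M] {A : ℕ → ℕ} {K : ℕ}
    (hA0 : A 0 = 0) (hA : MonotoneOn A (Set.Iic K)) (f : ℕ → M) :
    ∑ n ∈ range (A K), f n = ∑ i ∈ range K, ∑ n ∈ Ico (A i) (A (i + 1)), f n := by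
  induction K with
  | zero => simp [hA0]
  | succ K ih =>
    rw [sum_range_succ, ← ih (hA.mono (Set.Iic_subset_Iic.2 K.le_succ)),
      sum_range_add_sum_Ico _ (hA (by simp) (by simp) K.le_succ)]

section Blocks

variable {A : ℕ → ℕ} {K k : ℕ}

theorem exists_block_of_lt (hA0 : A 0 = 0) {n : ℕ} (hn : n < A K) :
    ∃ i < K, A i ≤ n ∧ n < A (i + 1) := by
  induction K with
  | zero => omega
  | succ K ih =>
    by_cases h : n < A K
    · obtain ⟨i, hi, hin⟩ := ih h
      exact ⟨i, by omega, hin⟩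
    · exact ⟨K, K.lt_succ_self, by omega, hn⟩

theorem findGreatest_le_eq_of_block {i n : ℕ} (hA : MonotoneOn A (Set.Iic K))
    (hi : i < K) (h1 : A i ≤ n) (h2 : n < A (i + 1)) :
    Nat.findGreatest (fun i => A i ≤ n) K = i :=
  Nat.findGreatest_eq_iff.2 ⟨hi.le, fun _ => h1, fun m him hmK hm =>
    (h2.trans_le (hA (Set.mem_Iic.2 (by omega)) (Set.mem_Iic.2 hmK) him)).not_ge hm⟩

/-- Points are indexed `1, …, k` as in the paper: `j : ZMod k` is the point `n + 1` with
`n = (j - 1).val`, and block `i` (indexed from `0`) is `{A i + 1, …, A (i + 1)}`. -/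
def blockOf (A : ℕ → ℕ) (K : ℕ) {k : ℕ} (j : ZMod k) : ZMod K :=
  (Nat.findGreatest (fun i => A i ≤ (j - 1).val) K : ℕ)

def blockTop (A : ℕ → ℕ) {K : ℕ} (k : ℕ) (i : ZMod K) : ZMod k :=
  (A (i.val + 1) : ℕ)

theorem blockOf_natCast_succ (hA : MonotoneOn A (Set.Iic K)) {i n : ℕ} (hi : i < K)
    (h1 : A i ≤ n) (h2 : n < A (i + 1)) (hnk : n < k) :
    blockOf A K ((n + 1 : ℕ) : ZMod k) = i := by
  rw [blockOf, Nat.cast_succ, add_sub_cancel_right, ZMod.val_natCast_of_lt hnk,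
    findGreatest_le_eq_of_block hA hi h1 h2]

theorem blockTop_natCast {i : ℕ} (hi : i < K) :
    blockTop A k (i : ZMod K) = (A (i + 1) : ZMod k) := by
  rw [blockTop, ZMod.val_natCast_of_lt hi]

theorem blockOf_blockTop [NeZero K] (hA : StrictMonoOn A (Set.Iic K)) (hAK : A K = k) (i : ZMod K) :
    blockOf A K (blockTop A k i) = i := by
  have hi := i.val_lt
  have hlt : A i.val < A (i.val + 1) :=
    hA (Set.mem_Iic.2 hi.le) (Set.mem_Iic.2 hi) i.val.lt_succ_self
  have hle : A (i.val + 1) ≤ k :=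
    hAK ▸ hA.monotoneOn (Set.mem_Iic.2 hi) (Set.mem_Iic.2 le_rfl) hi
  rw [blockTop, ← Nat.sub_add_cancel (show 1 ≤ A (i.val + 1) by omega),
    blockOf_natCast_succ hA.monotoneOn hi (by omega) (by omega) (by omega), ZMod.natCast_zmod_val]

theorem blockOf_blockTop_add_one [NeZero K] (hA0 : A 0 = 0) (hA : StrictMonoOn A (Set.Iic K))
    (hAK : A K = k) (i : ZMod K) :
    blockOf A K (blockTop A k i + 1) = i + 1 := by
  have hi := i.val_lt
  have hsucc : i + 1 = ((i.val + 1 : ℕ) : ZMod K) := by push_cast [ZMod.natCast_zmod_val]; rfl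
  have hstep : ∀ m < K, A m < A (m + 1) := fun m hm =>
    hA (Set.mem_Iic.2 hm.le) (Set.mem_Iic.2 hm) m.lt_succ_self
  rcases (show i.val + 1 ≤ K from hi).lt_or_eq with hlt | heq
  · have hle : A (i.val + 1 + 1) ≤ k :=
      hAK ▸ hA.monotoneOn (Set.mem_Iic.2 hlt) (Set.mem_Iic.2 le_rfl) hlt
    rw [blockTop, ← Nat.cast_succ, blockOf_natCast_succ hA.monotoneOn hlt le_rfl (hstep _ hlt)
      ((hstep _ hlt).trans_le hle), hsucc]
  · have h0 := hstep 0 (by omega)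
    have hk : 0 < k := hAK ▸ hA0 ▸ hA (Set.mem_Iic.2 (Nat.zero_le K)) (Set.mem_Iic.2 le_rfl)
      (by omega)
    rw [blockTop, heq, hAK, ZMod.natCast_self, ← Nat.cast_zero, ← Nat.cast_succ,
      blockOf_natCast_succ hA.monotoneOn (i := 0) (by omega) hA0.le (by omega) hk, hsucc, heq,
      ZMod.natCast_self, Nat.cast_zero]

theorem apply_eq_apply_blockTop_blockOf {X : Type*} [NeZero k] (hA0 : A 0 = 0)
    (hA : MonotoneOn A (Set.Iic K)) (hAK : A K = k) (f : ZMod k → X)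
    (hf : ∀ i < K, ∀ j : ℕ, A i < j → j ≤ A (i + 1) → f j = f (A (i + 1))) (j : ZMod k) :
    f j = f (blockTop A k (blockOf A K j)) := by
  obtain ⟨n, hn, rfl⟩ : ∃ n < k, j = ((n + 1 : ℕ) : ZMod k) :=
    ⟨(j - 1).val, (j - 1).val_lt, by rw [Nat.cast_succ, ZMod.natCast_zmod_val, sub_add_cancel]⟩
  obtain ⟨i, hi, h1, h2⟩ := exists_block_of_lt hA0 (hAK ▸ hn)
  rw [blockOf_natCast_succ hA hi h1 h2 hn, blockTop_natCast hi]
  exact hf i hi (n + 1) (by omega) h2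

theorem sum_blockOf {M : Type*} [AddCommMonoid M] [NeZero k] [NeZero K] (hA0 : A 0 = 0)
    (hA : StrictMonoOn A (Set.Iic K)) (hAK : A K = k) (F : ZMod k → ZMod K → ZMod K → M)
    (hF : ∀ j p, F j p p = 0) :
    ∑ j, F j (blockOf A K j) (blockOf A K (j + 1)) = ∑ i, F (blockTop A k i) i (i + 1) := by
  set G : ZMod k → M := fun j => F j (blockOf A K j) (blockOf A K (j + 1))
  have hle : ∀ i ≤ K, A i ≤ k := fun i hi =>
    hAK ▸ hA.monotoneOn (Set.mem_Iic.2 hi) (Set.mem_Iic.2 le_rfl) hi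
  have hsum_block : ∀ i < K, ∑ n ∈ Ico (A i) (A (i + 1)), G ((n + 1 : ℕ) : ZMod k) =
      F (blockTop A k (i : ZMod K)) i (i + 1) := by
    intro i hi
    have hlt : A i < A (i + 1) := hA (Set.mem_Iic.2 hi.le) (Set.mem_Iic.2 hi) i.lt_succ_self
    have hAi := hle (i + 1) hi
    rw [sum_eq_single (A (i + 1) - 1)]
    · have htop : ((A (i + 1) - 1 + 1 : ℕ) : ZMod k) = blockTop A k (i : ZMod K) := by
        rw [blockTop_natCast hi, Nat.sub_add_cancel (by omega)]
      simp only [G, htop, blockOf_blockTop hA hAK, blockOf_blockTop_add_one hA0 hA hAK]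
    · intro n hn hne
      rw [mem_Ico] at hn
      have hn1 := blockOf_natCast_succ (k := k) hA.monotoneOn hi hn.1 (by omega) (by omega)
      have hn2 := blockOf_natCast_succ (k := k) hA.monotoneOn hi (n := n + 1) (by omega)
        (by omega) (by omega)
      simp only [G, ← Nat.cast_succ, hn1, hn2, hF]
    · intro h
      exact absurd (mem_Ico.2 ⟨by omega, by omega⟩) h
  calc ∑ j, G j = ∑ j, G (j + 1) := (Equiv.sum_comp (Equiv.addRight 1) G).symm
    _ = ∑ n ∈ range k, G ((n + 1 : ℕ) : ZMod k) := by
      rw [ZMod.sum_eq_sum_range]; simp only [Nat.cast_succ]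
    _ = ∑ i ∈ range K, ∑ n ∈ Ico (A i) (A (i + 1)), G ((n + 1 : ℕ) : ZMod k) := by
      conv_lhs => rw [show range k = range (A K) by rw [hAK]]
      exact sum_range_eq_sum_sum_Ico hA0 hA.monotoneOn _
    _ = ∑ i ∈ range K, F (blockTop A k (i : ZMod K)) i (i + 1) :=
      sum_congr rfl fun i hi => hsum_block i (mem_range.1 hi)
    _ = ∑ i, F (blockTop A k i) i (i + 1) :=
      (ZMod.sum_eq_sum_range K fun i => F (blockTop A k i) i (i + 1)).symm

end Blocks

theorem critical_fk_block_collapse_general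
    {E : Type*} [NormedAddCommGroup E] [InnerProductSpace ℝ E]
    (M : Set E) (k k' : ℕ) [NeZero k] [NeZero k']
    (β : ℕ → ℕ) (hβ : ∀ i, 1 ≤ i → i ≤ k' → 1 ≤ β i)
    (A : ℕ → ℕ) (hA0 : A 0 = 0)
    (hAstep : ∀ i, A (i + 1) = A i + β (i + 1))
    (hAk : A k' = k)
    (x : ZMod k → E)
    (a : ZMod k → E) (ha : ∀ i, ‖a i‖ = 1)
    -- the vertices coincide in blocks:
    (hblock : ∀ i, 1 ≤ i → i ≤ k' → ∀ j, A (i - 1) + 1 ≤ j → j ≤ A i →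
      x ((j : ℕ) : ZMod k) = x ((A i : ℕ) : ZMod k))
    -- `(a₁,…,a_k,x₁,…,x_k)` is a critical point of `f_k` along curves:
    (hcrit : ∀ (α γ : ZMod k → ℝ → E),
      (∀ i t, ‖α i t‖ = 1) → (∀ i, α i 0 = a i) →
      (∀ i, DifferentiableAt ℝ (α i) 0) →
      (∀ i t, γ i t ∈ M) → (∀ i, γ i 0 = x i) →
      (∀ i, DifferentiableAt ℝ (γ i) 0) →
      HasDerivAt (fun t => ∑ i : ZMod k, ⟪α i t, γ i t - γ (i + 1) t⟫) 0 0)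
    -- the collapsed point `(a_{α_1},…,a_{α_{k'}}, x_{α_1},…,x_{α_{k'}})`:
    (b y : ZMod k' → E)
    (hb : ∀ i : ZMod k', b i = a ((A (i.val + 1) : ℕ) : ZMod k))
    (hy : ∀ i : ZMod k', y i = x ((A (i.val + 1) : ℕ) : ZMod k)) :
    -- it is a critical point of `f_{k'}` along curves:
    ∀ (α γ : ZMod k' → ℝ → E),
      (∀ i t, ‖α i t‖ = 1) → (∀ i, α i 0 = b i) →
      (∀ i, DifferentiableAt ℝ (α i) 0) →
      (∀ i t, γ i t ∈ M) → (∀ i, γ i 0 = y i) →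
      (∀ i, DifferentiableAt ℝ (γ i) 0) →
      HasDerivAt (fun t => ∑ i : ZMod k', ⟪α i t, γ i t - γ (i + 1) t⟫) 0 0 := by
  intro α γ hα_norm hα0 hα_diff hγM hγ0 hγ_diff
  classical
  have hA : StrictMonoOn A (Set.Iic k') := strictMonoOn_Iic_of_lt_succ fun i hi => by
    have := hβ (i + 1) (by omega) (by omega)
    rw [Order.succ_eq_add_one, hAstep]
    omega
  let α' : ZMod k → ℝ → E := fun j =>
    if j ∈ Set.range (blockTop A (K := k') k) then α (blockOf A k' j) else fun _ => a j
  have hα'_top : ∀ i, α' (blockTop A k i) = α i := fun i => by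
    simp only [α', if_pos (Set.mem_range_self i), blockOf_blockTop hA hAk]
  have hα'_cases : ∀ j, α' j = α (blockOf A k' j) ∨ α' j = fun _ => a j := fun j => by
    unfold α'
    split_ifs
    exacts [Or.inl rfl, Or.inr rfl]
  have hα'0 : ∀ j, α' j 0 = a j := by
    intro j
    by_cases hj : j ∈ Set.range (blockTop A (K := k') k)
    · obtain ⟨i, rfl⟩ := hj
      rw [hα'_top, hα0, hb, blockTop]
    · simp only [α', if_neg hj]
  have hx : ∀ j, x j = y (blockOf A k' j) := fun j =>
    (hy _).symm ▸ apply_eq_apply_blockTop_blockOf hA0 hA.monotoneOn hAk x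
      (fun i hi n h1 h2 => hblock (i + 1) (by omega) (by omega) n (by simpa using h1) h2) j
  have hlift := hcrit α' (fun j => γ (blockOf A k' j))
    (fun j t => by rcases hα'_cases j with h | h <;> rw [h]; exacts [hα_norm _ t, ha j])
    hα'0
    (fun j => by
      rcases hα'_cases j with h | h <;> rw [h]; exacts [hα_diff _, differentiableAt_const _])
    (fun j => hγM _) (fun j => by rw [hγ0, hx]) (fun j => hγ_diff _)
  convert hlift using 2 with t
  rw [sum_blockOf hA0 hA hAk (fun j p q => ⟪α' j t, γ p t - γ q t⟫) (by simp)]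
  simp only [hα'_top]

/-- Collapse of a critical point of `f_k` with vertices coinciding in `k'`
consecutive blocks `x_{α_{i−1}+1} = ⋯ = x_{α_i}` (where `α_i = β₁ + ⋯ + β_i`,
`α_0 = 0`, `α_{k'} = k`, and consecutive blocks have distinct values): the
point `(a_{α_1},…,a_{α_{k'}}, x_{α_1},…,x_{α_{k'}})` is a critical point of
`f_{k'}` along curves. -/
theorem critical_fk_block_collapse
    {E : Type*} [NormedAddCommGroup E] [InnerProductSpace ℝ E]
    (M : Set E) (k k' : ℕ) [NeZero k] [NeZero k']
    (hk : 2 < k) (hk'1 : 1 < k') (hk'2 : k' < k)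
    (β : ℕ → ℕ) (hβ : ∀ i, 1 ≤ i → i ≤ k' → 1 ≤ β i)
    (A : ℕ → ℕ) (hA0 : A 0 = 0)
    (hAstep : ∀ i, A (i + 1) = A i + β (i + 1))
    (hAk : A k' = k)
    (x : ZMod k → E) (hxM : ∀ i, x i ∈ M)
    (a : ZMod k → E) (ha : ∀ i, ‖a i‖ = 1)
    -- the vertices coincide in blocks:
    (hblock : ∀ i, 1 ≤ i → i ≤ k' → ∀ j, A (i - 1) + 1 ≤ j → j ≤ A i →
      x ((j : ℕ) : ZMod k) = x ((A i : ℕ) : ZMod k))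
    -- consecutive blocks are distinct (for `i = k'` this reads `x_{α_{k'}} ≠ x₁`):
    (hsep : ∀ i, 1 ≤ i → i ≤ k' →
      x ((A i : ℕ) : ZMod k) ≠ x (((A i + 1 : ℕ)) : ZMod k))
    -- `(a₁,…,a_k,x₁,…,x_k)` is a critical point of `f_k` along curves:
    (hcrit : ∀ (α γ : ZMod k → ℝ → E),
      (∀ i t, ‖α i t‖ = 1) → (∀ i, α i 0 = a i) →
      (∀ i, DifferentiableAt ℝ (α i) 0) →
      (∀ i t, γ i t ∈ M) → (∀ i, γ i 0 = x i) →
      (∀ i, DifferentiableAt ℝ (γ i) 0) →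
      HasDerivAt (fun t => ∑ i : ZMod k, ⟪α i t, γ i t - γ (i + 1) t⟫) 0 0)
    -- the collapsed point `(a_{α_1},…,a_{α_{k'}}, x_{α_1},…,x_{α_{k'}})`:
    (b y : ZMod k' → E)
    (hb : ∀ i : ZMod k', b i = a ((A (i.val + 1) : ℕ) : ZMod k))
    (hy : ∀ i : ZMod k', y i = x ((A (i.val + 1) : ℕ) : ZMod k)) :
    -- it is a critical point of `f_{k'}` along curves:
    ∀ (α γ : ZMod k' → ℝ → E),
      (∀ i t, ‖α i t‖ = 1) → (∀ i, α i 0 = b i) →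
      (∀ i, DifferentiableAt ℝ (α i) 0) →
      (∀ i t, γ i t ∈ M) → (∀ i, γ i 0 = y i) →
      (∀ i, DifferentiableAt ℝ (γ i) 0) →
      HasDerivAt (fun t => ∑ i : ZMod k', ⟪α i t, γ i t - γ (i + 1) t⟫) 0 0 :=
  critical_fk_block_collapse_general M k k' β hβ A hA0 hAstep hAk x a ha hblock hcrit b y hb hy
end
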